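/- arXiv:1502.02218 — 4 statements merged into one kernel-verified Lean document; each statement's English description precedes it below -/
import Mathlib

section
/- Let f: [0,1] → ℝ be a C¹ concave function with f(0) = 0, and let R ∈ ℝ. Then max over R₁ of min( max_{s∈[0,1]}(f(s) - s·R₁), R₁ - R ) equals max_{s∈[0,1]} (f(s) - s·R)/(1+s), and the maximum over R₁ is attained at R₁ = R + max_{s∈[0,1]} (f(s) - s·R)/(1+s). -/
open Set

/-- For a C¹ concave `f` on `[0,1]` with `f 0 = 0`:
  `max_{R₁} min(max_{s∈[0,1]}(f s - s R₁), R₁ - R) = max_{s∈[0,1]} (f s - s R)/(1+s)`,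
  with the maximum over `R₁` attained at `R₁ = R + max_{s∈[0,1]} (f s - s R)/(1+s)`. -/
theorem maxmin_exponent_opt
    (f : ℝ → ℝ) (R : ℝ)
    (hconc : ConcaveOn ℝ (Set.Icc (0:ℝ) 1) f)
    (hC1 : ContDiffOn ℝ 1 f (Set.Icc (0:ℝ) 1))
    (hf0 : f 0 = 0)
    (M : ℝ) (hM : M = sSup ((fun s => (f s - s * R) / (1 + s)) '' Set.Icc (0:ℝ) 1)) :
    (∀ R₁ : ℝ,
      min (sSup ((fun s => f s - s * R₁) '' Set.Icc (0:ℝ) 1)) (R₁ - R) ≤ M) ∧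
    min (sSup ((fun s => f s - s * (R + M)) '' Set.Icc (0:ℝ) 1)) ((R + M) - R) = M := by
  have hfc : ContinuousOn f (Icc 0 1) := hC1.continuousOn
  set g : ℝ → ℝ := fun s => (f s - s * R) / (1 + s) with hg
  have h0mem : (0:ℝ) ∈ Icc (0:ℝ) 1 := left_mem_Icc.mpr one_pos.le
  have hgc : ContinuousOn g (Icc 0 1) := by
    apply ContinuousOn.div
    · exact hfc.sub (continuousOn_id.mul continuousOn_const)
    · exact continuousOn_const.add continuousOn_id
    · intro s hs; have := hs.1; intro h; linarith
  obtain ⟨s₀, hs₀, hmax⟩ := isCompact_Icc.exists_isMaxOn ⟨0, h0mem⟩ hgc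
  have hMeq : M = g s₀ := by
    rw [hM]
    exact IsGreatest.csSup_eq ⟨⟨s₀, hs₀, rfl⟩, by rintro _ ⟨s, hs, rfl⟩; exact hmax hs⟩
  have key : ∀ s ∈ Icc (0:ℝ) 1, f s - s * (R + M) ≤ M := by
    intro s hs
    have hgle : g s ≤ M := hMeq ▸ hmax hs
    have h1 : (0:ℝ) < 1 + s := by linarith [hs.1]
    have hfs : f s - s * R = (1 + s) * g s := by
      simp only [hg]; field_simp
    nlinarith [mul_le_mul_of_nonneg_left hgle h1.le]
  have keyeq : f s₀ - s₀ * (R + M) = M := by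
    have h1 : (0:ℝ) < 1 + s₀ := by linarith [hs₀.1]
    have hfs : f s₀ - s₀ * R = (1 + s₀) * g s₀ := by
      simp only [hg]; field_simp
    rw [hMeq]
    nlinarith [hfs]
  constructor
  · intro R₁
    rcases le_or_gt (R₁ - R) M with h | h
    · exact le_trans (min_le_right _ _) h
    · refine le_trans (min_le_left _ _) ?_
      apply csSup_le (((nonempty_Icc).mpr one_pos.le).image _)
      rintro _ ⟨s, hs, rfl⟩
      have hk := key s hs
      have hs0 := hs.1
      show f s - s * R₁ ≤ M
      nlinarith [mul_nonneg hs0 (by linarith : (0:ℝ) ≤ R₁ - (R + M))]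
  · have hsup : sSup ((fun s => f s - s * (R + M)) '' Icc 0 1) = M :=
      IsGreatest.csSup_eq ⟨⟨s₀, hs₀, keyeq⟩, by rintro _ ⟨s, hs, rfl⟩; exact key s hs⟩
    rw [hsup]; simp
end

section
/- Let f_θ: [0,1] → ℝ, θ ∈ Θ₀, be a family of C¹ concave functions with f_θ(0) = 0, and R ∈ ℝ. Then max_{R₁} inf_{θ∈Θ₀} min( max_{s∈[0,1]}(f_θ(s) - s·R₁), R₁ - R ) = inf_{θ∈Θ₀} max_{s∈[0,1]} (f_θ(s) - s·R)/(1+s), i.e., the maximization over R₁ and the infimum over θ can be exchanged, and the optimum is attained at R₁ = R + inf_{θ∈Θ₀} max_{s∈[0,1]} (f_θ(s) - s·R)/(1+s). -/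
open Set

/-- Lemma 2 of the paper: for a family of C¹ concave functions `f θ` on `[0,1]`
  with `f θ 0 = 0`:
  `max_{R₁} inf_θ min(max_{s∈[0,1]}(f θ s - s R₁), R₁ - R)
    = inf_θ max_{s∈[0,1]} (f θ s - s R)/(1+s)`,
  and the optimum is attained at `R₁ = R + inf_θ max_{s∈[0,1]} (f θ s - s R)/(1+s)`. -/
theorem maxmin_exponent_opt_family
    {ι : Type*} [Nonempty ι]
    (f : ι → ℝ → ℝ) (R : ℝ)
    (hconc : ∀ θ, ConcaveOn ℝ (Set.Icc (0:ℝ) 1) (f θ))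
    (hC1 : ∀ θ, ContDiffOn ℝ 1 (f θ) (Set.Icc (0:ℝ) 1))
    (hf0 : ∀ θ, f θ 0 = 0)
    (M : ι → ℝ)
    (hM : ∀ θ, M θ = sSup ((fun s => (f θ s - s * R) / (1 + s)) '' Set.Icc (0:ℝ) 1)) :
    (∀ R₁ : ℝ,
      (⨅ θ, min (sSup ((fun s => f θ s - s * R₁) '' Set.Icc (0:ℝ) 1)) (R₁ - R))
      ≤ ⨅ θ, M θ) ∧
    (⨅ θ, min (sSup ((fun s => f θ s - s * (R + ⨅ θ', M θ')) '' Set.Icc (0:ℝ) 1))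
        ((R + ⨅ θ', M θ') - R))
      = ⨅ θ, M θ := by
  have hne : (Set.Icc (0:ℝ) 1).Nonempty := ⟨0, by norm_num⟩
  have hcont : ∀ θ, ContinuousOn (f θ) (Set.Icc (0:ℝ) 1) := fun θ => (hC1 θ).continuousOn
  have hbdd1 : ∀ θ (c : ℝ), BddAbove ((fun s => f θ s - s * c) '' Set.Icc (0:ℝ) 1) := by
    intro θ c
    exact (isCompact_Icc.image_of_continuousOn
      ((hcont θ).sub (continuousOn_id.mul continuousOn_const))).bddAbove
  have hbdd2 : ∀ θ, BddAbove ((fun s => (f θ s - s * R) / (1 + s)) '' Set.Icc (0:ℝ) 1) := by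
    intro θ
    apply (isCompact_Icc.image_of_continuousOn ?_).bddAbove
    apply ContinuousOn.div ((hcont θ).sub (continuousOn_id.mul continuousOn_const))
      (continuousOn_const.add continuousOn_id)
    intro x hx
    have := hx.1
    change (1:ℝ) + x ≠ 0
    intro h
    linarith
  have hM0 : ∀ θ, 0 ≤ M θ := by
    intro θ
    rw [hM θ]
    have h0 : (0:ℝ) ∈ (fun s => (f θ s - s * R) / (1 + s)) '' Set.Icc (0:ℝ) 1 :=
      ⟨0, by norm_num, by simp [hf0 θ]⟩
    exact le_csSup (hbdd2 θ) h0
  have hbddM : BddBelow (Set.range M) := ⟨0, by rintro _ ⟨θ, rfl⟩; exact hM0 θ⟩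
  have key : ∀ (R₁ : ℝ) θ,
      min (sSup ((fun s => f θ s - s * R₁) '' Set.Icc (0:ℝ) 1)) (R₁ - R) ≤ M θ := by
    intro R₁ θ
    by_cases h : R₁ - R ≤ M θ
    · exact le_trans (min_le_right _ _) h
    · push_neg at h
      refine le_trans (min_le_left _ _) ?_
      apply csSup_le (hne.image _)
      rintro _ ⟨s, hs, rfl⟩
      have hs0 := hs.1
      have hs1 := hs.2
      have hMs : (f θ s - s * R) / (1 + s) ≤ M θ := by
        rw [hM θ]; exact le_csSup (hbdd2 θ) ⟨s, hs, rfl⟩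
      have h1s : (0:ℝ) < 1 + s := by linarith
      rw [div_le_iff₀ h1s] at hMs
      show f θ s - s * R₁ ≤ M θ
      nlinarith
  have keyLB : ∀ (R₁ : ℝ) θ, min (0:ℝ) (R₁ - R) ≤
      min (sSup ((fun s => f θ s - s * R₁) '' Set.Icc (0:ℝ) 1)) (R₁ - R) := by
    intro R₁ θ
    refine min_le_min ?_ le_rfl
    have h0 : (0:ℝ) ∈ (fun s => f θ s - s * R₁) '' Set.Icc (0:ℝ) 1 :=
      ⟨0, by norm_num, by simp [hf0 θ]⟩
    exact le_csSup (hbdd1 θ R₁) h0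
  have part1 : ∀ R₁ : ℝ,
      (⨅ θ, min (sSup ((fun s => f θ s - s * R₁) '' Set.Icc (0:ℝ) 1)) (R₁ - R))
      ≤ ⨅ θ, M θ := by
    intro R₁
    apply le_ciInf
    intro θ
    refine le_trans (ciInf_le ?_ θ) (key R₁ θ)
    exact ⟨min 0 (R₁ - R), by rintro _ ⟨θ', rfl⟩; exact keyLB R₁ θ'⟩
  refine ⟨part1, ?_⟩
  refine le_antisymm (part1 (R + ⨅ θ', M θ')) ?_
  set I := ⨅ θ', M θ' with hI
  apply le_ciInf
  intro θ
  refine le_min ?_ (le_of_eq (by ring))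
  -- show I ≤ sSup of the image
  apply le_of_forall_pos_le_add
  intro ε hε
  have hIM : I ≤ M θ := ciInf_le hbddM θ
  have hlt : M θ - ε / 2 < sSup ((fun s => (f θ s - s * R) / (1 + s)) '' Set.Icc (0:ℝ) 1) := by
    rw [← hM θ]; linarith
  obtain ⟨y, ⟨s, hs, rfl⟩, hy⟩ := exists_lt_of_lt_csSup (hne.image _) hlt
  have hs0 := hs.1
  have hs1 := hs.2
  have h1s : (0:ℝ) < 1 + s := by linarith
  have hy' : (I - ε / 2) * (1 + s) < f θ s - s * R := by
    have : I - ε / 2 < (f θ s - s * R) / (1 + s) := by linarith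
    calc (I - ε / 2) * (1 + s) < ((f θ s - s * R) / (1 + s)) * (1 + s) := by
          exact mul_lt_mul_of_pos_right this h1s
      _ = f θ s - s * R := by field_simp
  have hmem : f θ s - s * (R + I) ∈ (fun s => f θ s - s * (R + I)) '' Set.Icc (0:ℝ) 1 :=
    ⟨s, hs, rfl⟩
  have hle : f θ s - s * (R + I) ≤
      sSup ((fun s => f θ s - s * (R + I)) '' Set.Icc (0:ℝ) 1) :=
    le_csSup (hbdd1 θ (R + I)) hmem
  nlinarith
end

section
/- Let f: [0,1] → ℝ be C¹, concave, with f(0)=0, and let R ∈ ℝ with max_{s∈[0,1]}(f(s) - sR) > 0. Define g(s) := (f(s) - sR)/(1+s). Then any maximizer s* of s ↦ f(s) - s·R₁* where R₁* satisfies max_{s∈[0,1]}(f(s)-sR₁*) = R₁* - R, is also a maximizer of g on [0,1], and conversely; in particular max_{s∈[0,1]} g(s) = R₁* - R. -/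
open Set

/-- Key step of Lemma 2: if `R₁*` is the fixed point where
  `max_{s∈[0,1]}(f s - s R₁*) = R₁* - R`, then the maximizers of
  `s ↦ f s - s R₁*` on `[0,1]` coincide with the maximizers of
  `g(s) = (f s - s R)/(1+s)`, and `max g = R₁* - R`. -/
theorem fixed_point_maximizers
    (f : ℝ → ℝ) (R : ℝ)
    (hconc : ConcaveOn ℝ (Set.Icc (0:ℝ) 1) f)
    (hC1 : ContDiffOn ℝ 1 f (Set.Icc (0:ℝ) 1))
    (hf0 : f 0 = 0)
    (hpos : 0 < sSup ((fun s => f s - s * R) '' Set.Icc (0:ℝ) 1))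
    (R₁ : ℝ)
    (hfix : IsGreatest ((fun s => f s - s * R₁) '' Set.Icc (0:ℝ) 1) (R₁ - R)) :
    (∀ s' ∈ Set.Icc (0:ℝ) 1,
      ((∀ s ∈ Set.Icc (0:ℝ) 1, f s - s * R₁ ≤ f s' - s' * R₁) ↔
       (∀ s ∈ Set.Icc (0:ℝ) 1,
          (f s - s * R) / (1 + s) ≤ (f s' - s' * R) / (1 + s')))) ∧
    IsGreatest ((fun s => (f s - s * R) / (1 + s)) '' Set.Icc (0:ℝ) 1) (R₁ - R) := by
  obtain ⟨hmem, hub⟩ := hfix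
  obtain ⟨s₀, hs₀, hs₀eq⟩ := hmem
  simp only [mem_upperBounds, Set.mem_image] at hub
  have hub' : ∀ s ∈ Icc (0:ℝ) 1, f s - s * R₁ ≤ R₁ - R := fun s hs =>
    hub _ ⟨s, hs, rfl⟩
  have key : ∀ s ∈ Icc (0:ℝ) 1, (f s - s * R) / (1 + s) ≤ R₁ - R := by
    intro s hs
    have h1 : (0:ℝ) < 1 + s := by linarith [hs.1]
    have := hub' s hs
    rw [div_le_iff₀ h1]
    nlinarith
  have keyeq : ∀ s ∈ Icc (0:ℝ) 1,
      (f s - s * R₁ = R₁ - R ↔ (f s - s * R) / (1 + s) = R₁ - R) := by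
    intro s hs
    have h1 : (0:ℝ) < 1 + s := by linarith [hs.1]
    rw [div_eq_iff (ne_of_gt h1)]
    constructor <;> intro h <;> nlinarith
  have hs₀eq' : f s₀ - s₀ * R₁ = R₁ - R := hs₀eq
  have g0 : (f s₀ - s₀ * R) / (1 + s₀) = R₁ - R := (keyeq s₀ hs₀).1 hs₀eq'
  constructor
  · intro s' hs'
    constructor
    · intro hmax s hs
      have h1 : f s' - s' * R₁ = R₁ - R :=
        le_antisymm (hub' s' hs') (hs₀eq' ▸ hmax s₀ hs₀)
      rw [(keyeq s' hs').1 h1]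
      exact key s hs
    · intro hmax s hs
      have h2 : (f s' - s' * R) / (1 + s') = R₁ - R :=
        le_antisymm (key s' hs') (g0 ▸ hmax s₀ hs₀)
      rw [(keyeq s' hs').2 h2]
      exact hub' s hs
  · exact ⟨⟨s₀, hs₀, g0⟩, by rintro x ⟨s, hs, rfl⟩; exact key s hs⟩
end

section
/- (Discrete covering bound for Rényi divergence) Let {P_θ}_{θ∈Θ} be a family of probability distributions, let Θ_n be a finite subset of Θ, and suppose for a given θ there exists θ' ∈ Θ_n with D_{1+s}(P_θ‖P_{θ'}) ≤ c/n for all s in some range. Let Q^n := (1/|Θ_n|)·Σ_{θ''∈Θ_n} P_{θ''}^n be the uniform mixture of n-fold i.i.d. products. Then D_{1+s}(P_θ^n‖Q^n) ≤ log|Θ_n| + c. -/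
open MeasureTheory Real

/-- Discrete covering bound: if some `θ' ∈ Θ_n` satisfies
  `D_{1+s}(P_θ‖P_{θ'}) ≤ c/n`, then the uniform mixture `Q^n` of the n-fold
  products over `Θ_n` satisfies `D_{1+s}(P_θ^n‖Q^n) ≤ log|Θ_n| + c`. -/
theorem discrete_covering_renyi_bound
    {Θ Y : Type*} [MeasurableSpace Y] (μ : Measure Y) [SigmaFinite μ]
    (p : Θ → Y → ℝ) (hp : ∀ θ y, 0 < p θ y) (hpm : ∀ θ, Measurable (p θ))
    (hp1 : ∀ θ, ∫ y, p θ y ∂μ = 1)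
    (n : ℕ) (hn : 0 < n) (Θn : Finset Θ) (hΘn : Θn.Nonempty)
    (θ θ' : Θ) (hθ' : θ' ∈ Θn) (s c : ℝ) (hs : 0 < s)
    (hclose : (1/s) * Real.log (∫ y, p θ y * (p θ y / p θ' y) ^ s ∂μ) ≤ c / n)
    (hint : Integrable (fun y => p θ y * (p θ y / p θ' y) ^ s) μ) :
    (1/s) * Real.log (∫ yn : Fin n → Y,
        (∏ i, p θ (yn i)) *
          ((∏ i, p θ (yn i)) /
            ((Θn.card : ℝ)⁻¹ * ∑ θ'' ∈ Θn, ∏ i, p θ'' (yn i))) ^ s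
        ∂(Measure.pi fun _ => μ))
      ≤ Real.log (Θn.card) + c := by
  letI : MeasureSpace Y := ⟨μ⟩
  set h : Y → ℝ := fun y => p θ y * (p θ y / p θ' y) ^ s with hh
  set I : ℝ := ∫ y, h y ∂μ with hI
  have hcard : (0 : ℝ) < Θn.card := by exact_mod_cast Finset.card_pos.mpr hΘn
  -- positivity of I
  have hμ : μ ≠ 0 := by
    intro h0
    have := hp1 θ
    rw [h0, integral_zero_measure] at this
    norm_num at this
  have hhpos : ∀ y, 0 < h y := fun y =>
    mul_pos (hp θ y) (Real.rpow_pos_of_pos (div_pos (hp θ y) (hp θ' y)) s)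
  have hIpos : 0 < I := by
    rw [hI, integral_pos_iff_support_of_nonneg (fun y => (hhpos y).le) hint]
    have : Function.support h = Set.univ := Set.eq_univ_of_forall fun y => (hhpos y).ne'
    rw [this]
    exact Measure.measure_univ_pos.mpr hμ
  -- the bound function
  set B : (Fin n → Y) → ℝ := fun yn => (Θn.card : ℝ) ^ s * ∏ i, h (yn i) with hB
  have hmeas : ∀ (t : Θ), Measurable fun yn : Fin n → Y => ∏ i, p t (yn i) :=
    fun t => Finset.measurable_prod _ fun i _ => (hpm t).comp (measurable_pi_apply i)
  -- pointwise bound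
  have hpoint : ∀ yn : Fin n → Y,
      (∏ i, p θ (yn i)) * ((∏ i, p θ (yn i)) /
        ((Θn.card : ℝ)⁻¹ * ∑ θ'' ∈ Θn, ∏ i, p θ'' (yn i))) ^ s ≤ B yn := by
    intro yn
    have hf : 0 < ∏ i, p θ (yn i) := Finset.prod_pos fun i _ => hp θ (yn i)
    have hg : 0 < ∏ i, p θ' (yn i) := Finset.prod_pos fun i _ => hp θ' (yn i)
    have hQ : (Θn.card : ℝ)⁻¹ * ∏ i, p θ' (yn i) ≤
        (Θn.card : ℝ)⁻¹ * ∑ θ'' ∈ Θn, ∏ i, p θ'' (yn i) := by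
      apply mul_le_mul_of_nonneg_left _ (by positivity)
      exact Finset.single_le_sum (fun t _ => le_of_lt (Finset.prod_pos fun i _ => hp t (yn i))) hθ'
    have hQpos : 0 < (Θn.card : ℝ)⁻¹ * ∏ i, p θ' (yn i) := by positivity
    have hdiv : (∏ i, p θ (yn i)) /
        ((Θn.card : ℝ)⁻¹ * ∑ θ'' ∈ Θn, ∏ i, p θ'' (yn i)) ≤
        (Θn.card : ℝ) * ((∏ i, p θ (yn i)) / ∏ i, p θ' (yn i)) := by
      rw [div_le_iff₀ (lt_of_lt_of_le hQpos hQ)]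
      calc (∏ i, p θ (yn i))
          = (Θn.card : ℝ) * ((∏ i, p θ (yn i)) / ∏ i, p θ' (yn i)) *
            ((Θn.card : ℝ)⁻¹ * ∏ i, p θ' (yn i)) := by
            field_simp
        _ ≤ _ := by
            apply mul_le_mul_of_nonneg_left hQ
            positivity
    have hprod : ∏ i, h (yn i) = (∏ i, p θ (yn i)) *
        ((∏ i, p θ (yn i)) / ∏ i, p θ' (yn i)) ^ s := by
      rw [hh]
      simp only []
      rw [Finset.prod_mul_distrib, Real.finset_prod_rpow _ _
        (fun i _ => (div_pos (hp θ (yn i)) (hp θ' (yn i))).le) s,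
        Finset.prod_div_distrib]
    simp only [hB]
    rw [hprod]
    have hqpos : 0 < (Θn.card : ℝ)⁻¹ * ∑ θ'' ∈ Θn, ∏ i, p θ'' (yn i) := by
      apply mul_pos (by positivity)
      exact Finset.sum_pos (fun t _ => Finset.prod_pos fun i _ => hp t (yn i)) hΘn
    have := Real.rpow_le_rpow (div_pos hf hqpos).le hdiv hs.le
    rw [Real.mul_rpow hcard.le (div_pos hf hg).le] at this
    calc (∏ i, p θ (yn i)) * ((∏ i, p θ (yn i)) /
          ((Θn.card : ℝ)⁻¹ * ∑ θ'' ∈ Θn, ∏ i, p θ'' (yn i))) ^ s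
        ≤ (∏ i, p θ (yn i)) * ((Θn.card : ℝ) ^ s *
            ((∏ i, p θ (yn i)) / ∏ i, p θ' (yn i)) ^ s) :=
          mul_le_mul_of_nonneg_left this hf.le
      _ = (Θn.card : ℝ) ^ s * ((∏ i, p θ (yn i)) *
            ((∏ i, p θ (yn i)) / ∏ i, p θ' (yn i)) ^ s) := by ring
  -- integrability of the bound
  have hhint : Integrable h μ := hint
  have hBint : Integrable B (Measure.pi fun _ => μ) := by
    have : Integrable (fun yn : Fin n → Y => ∏ i, h (yn i)) (volume : Measure (Fin n → Y)) :=
      Integrable.fin_nat_prod (fun _ => hhint)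
    exact this.const_mul _
  -- measurability of LHS integrand
  have hFmeas : Measurable (fun yn : Fin n → Y =>
      (∏ i, p θ (yn i)) * ((∏ i, p θ (yn i)) /
        ((Θn.card : ℝ)⁻¹ * ∑ θ'' ∈ Θn, ∏ i, p θ'' (yn i))) ^ s) := by
    have hbase : Measurable (fun yn : Fin n → Y => (∏ i, p θ (yn i)) /
        ((Θn.card : ℝ)⁻¹ * ∑ θ'' ∈ Θn, ∏ i, p θ'' (yn i))) :=
      (hmeas θ).div ((Finset.measurable_sum _ fun t _ => hmeas t).const_mul _)
    have hrw : (fun yn : Fin n → Y =>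
        (∏ i, p θ (yn i)) * ((∏ i, p θ (yn i)) /
          ((Θn.card : ℝ)⁻¹ * ∑ θ'' ∈ Θn, ∏ i, p θ'' (yn i))) ^ s) =
        fun yn => (∏ i, p θ (yn i)) * Real.exp (Real.log ((∏ i, p θ (yn i)) /
          ((Θn.card : ℝ)⁻¹ * ∑ θ'' ∈ Θn, ∏ i, p θ'' (yn i))) * s) := by
      funext yn
      have hq : 0 < (Θn.card : ℝ)⁻¹ * ∑ θ'' ∈ Θn, ∏ i, p θ'' (yn i) := by
        apply mul_pos (by positivity)
        exact Finset.sum_pos (fun t _ => Finset.prod_pos fun i _ => hp t (yn i)) hΘn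
      rw [Real.rpow_def_of_pos (div_pos (Finset.prod_pos fun i _ => hp θ (yn i)) hq)]
    rw [hrw]
    exact (hmeas θ).mul ((hbase.log.mul_const s).exp)
  have hFpos : ∀ yn : Fin n → Y, 0 < (∏ i, p θ (yn i)) * ((∏ i, p θ (yn i)) /
      ((Θn.card : ℝ)⁻¹ * ∑ θ'' ∈ Θn, ∏ i, p θ'' (yn i))) ^ s := by
    intro yn
    have hf : 0 < ∏ i, p θ (yn i) := Finset.prod_pos fun i _ => hp θ (yn i)
    have hq : 0 < (Θn.card : ℝ)⁻¹ * ∑ θ'' ∈ Θn, ∏ i, p θ'' (yn i) := by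
      apply mul_pos (by positivity)
      exact Finset.sum_pos (fun t _ => Finset.prod_pos fun i _ => hp t (yn i)) hΘn
    exact mul_pos hf (Real.rpow_pos_of_pos (div_pos hf hq) s)
  have hFint : Integrable (fun yn : Fin n → Y =>
      (∏ i, p θ (yn i)) * ((∏ i, p θ (yn i)) /
        ((Θn.card : ℝ)⁻¹ * ∑ θ'' ∈ Θn, ∏ i, p θ'' (yn i))) ^ s)
      (Measure.pi fun _ => μ) := by
    refine Integrable.mono' hBint hFmeas.aestronglyMeasurable ?_
    filter_upwards with yn
    rw [Real.norm_of_nonneg (hFpos yn).le]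
    exact hpoint yn
  -- the integral of the product
  have hprodint : ∫ yn : Fin n → Y, (∏ i, h (yn i)) ∂(Measure.pi fun _ => μ) = I ^ n := by
    have : ∫ x : Fin n → Y, ∏ i, h (x i) ∂(Measure.pi fun _ => μ) =
        (∫ y, h y ∂μ) ^ Fintype.card (Fin n) := MeasureTheory.integral_fintype_prod_eq_pow h
    simpa [Fintype.card_fin, volume_pi] using this
  have hle : ∫ yn : Fin n → Y,
      (∏ i, p θ (yn i)) * ((∏ i, p θ (yn i)) /
        ((Θn.card : ℝ)⁻¹ * ∑ θ'' ∈ Θn, ∏ i, p θ'' (yn i))) ^ s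
      ∂(Measure.pi fun _ => μ) ≤ (Θn.card : ℝ) ^ s * I ^ n := by
    calc _ ≤ ∫ yn, B yn ∂(Measure.pi fun _ => μ) :=
          integral_mono hFint hBint hpoint
      _ = (Θn.card : ℝ) ^ s * I ^ n := by
          rw [hB]
          rw [integral_const_mul, hprodint]
  -- positivity of LHS integral
  have hIntPos : 0 < ∫ yn : Fin n → Y,
      (∏ i, p θ (yn i)) * ((∏ i, p θ (yn i)) /
        ((Θn.card : ℝ)⁻¹ * ∑ θ'' ∈ Θn, ∏ i, p θ'' (yn i))) ^ s
      ∂(Measure.pi fun _ => μ) := by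
    rw [integral_pos_iff_support_of_nonneg (fun yn => (hFpos yn).le) hFint]
    have : Function.support (fun yn : Fin n → Y =>
        (∏ i, p θ (yn i)) * ((∏ i, p θ (yn i)) /
          ((Θn.card : ℝ)⁻¹ * ∑ θ'' ∈ Θn, ∏ i, p θ'' (yn i))) ^ s) = Set.univ :=
      Set.eq_univ_of_forall fun yn => (hFpos yn).ne'
    rw [this]
    apply Measure.measure_univ_pos.mpr
    intro h0
    apply hμ
    have hpi : (Measure.pi fun _ : Fin n => μ) Set.univ = (μ Set.univ) ^ n := by
      rw [Measure.pi_univ]; simp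
    rw [h0] at hpi
    have : μ Set.univ = 0 := by
      by_contra hne
      exact (pow_ne_zero n hne) hpi.symm
    exact Measure.measure_univ_eq_zero.mp this
  -- final arithmetic
  have hlog : Real.log (∫ yn : Fin n → Y,
      (∏ i, p θ (yn i)) * ((∏ i, p θ (yn i)) /
        ((Θn.card : ℝ)⁻¹ * ∑ θ'' ∈ Θn, ∏ i, p θ'' (yn i))) ^ s
      ∂(Measure.pi fun _ => μ)) ≤ s * Real.log (Θn.card) + n * Real.log I := by
    calc _ ≤ Real.log ((Θn.card : ℝ) ^ s * I ^ n) := Real.log_le_log hIntPos hle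
      _ = s * Real.log (Θn.card) + n * Real.log I := by
          rw [Real.log_mul (by positivity) (by positivity), Real.log_rpow hcard,
            Real.log_pow]
  have hmul : (1/s) * Real.log (∫ yn : Fin n → Y,
      (∏ i, p θ (yn i)) * ((∏ i, p θ (yn i)) /
        ((Θn.card : ℝ)⁻¹ * ∑ θ'' ∈ Θn, ∏ i, p θ'' (yn i))) ^ s
      ∂(Measure.pi fun _ => μ)) ≤ Real.log (Θn.card) + n * ((1/s) * Real.log I) := by
    have := mul_le_mul_of_nonneg_left hlog (by positivity : (0:ℝ) ≤ 1/s)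
    calc (1/s) * Real.log _ ≤ (1/s) * (s * Real.log (Θn.card) + n * Real.log I) := this
      _ = Real.log (Θn.card) + n * ((1/s) * Real.log I) := by
          field_simp
  refine hmul.trans ?_
  have : (n : ℝ) * ((1/s) * Real.log I) ≤ c := by
    calc (n : ℝ) * ((1/s) * Real.log I) ≤ n * (c / n) :=
        mul_le_mul_of_nonneg_left hclose (by positivity)
      _ = c := by field_simp
  linarith
end
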